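/- arXiv:2404.04185 — 6 statements merged into one kernel-verified Lean document; each statement's English description precedes it below -/
import Mathlib

section
/- Let A be a C*-algebra, J ⊆ A a closed two-sided ideal, and M a Hilbert C*-module over A. Let f : M → A be a bounded additive map that is anti-A-linear (f(m·a) = a*·f(m) for all m ∈ M, a ∈ A) and suppose that for every x ∈ J there exists an element m_x ∈ M with f(m)·x = ⟪m, m_x⟫ for all m ∈ M. Then for every x ∈ J, any such representing element m_x lies in M_J. (This expresses the identity (M^J)_J = M_J: every functional in M_1(J) multiplied by an element of J is represented by an element of M_J.) -/
/-! The representing element satisfies `⟪mₓ, mₓ⟫ = f(mₓ)·x ∈ J`, so it suffices that every `m`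
with `a := ⟪m, m⟫ ∈ J` lies in `M_J`. The elements `eₙ = n a (1 + n a)⁻¹` of the functional
calculus lie in `J` (as `eₙ = n (a - a eₙ)`), and
`‖m - m·eₙ‖² = ‖(1 - eₙ) a (1 - eₙ)‖ = ‖a (1 + n a)⁻²‖ ≤ 1/n`, so `m·eₙ → m`. -/

open scoped RightActions

/-- The Hilbert C⋆-module class as it stood in Mathlib of December 2024 (right `A`-action via
`Aᵐᵒᵖ`, inner product `A`-linear on the right); Mathlib's `CStarModule` now uses a left action. -/
class OldCStarModule (A : outParam <| Type*) (E : Type*) [NonUnitalSemiring A] [StarRing A]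
    [Module ℂ A] [AddCommGroup E] [Module ℂ E] [PartialOrder A] [SMul Aᵐᵒᵖ E] [Norm A] [Norm E]
    extends Inner A E where
  inner_add_right {x} {y} {z} : inner x (y + z) = inner x y + inner x z
  inner_self_nonneg {x} : 0 ≤ inner x x
  inner_self {x} : inner x x = 0 ↔ x = 0
  inner_op_smul_right {a : A} {x y : E} : inner x (y <• a) = inner x y * a
  inner_smul_right_complex {z : ℂ} {x} {y} : inner x (z • y) = z • inner x y
  star_inner x y : star (inner x y) = inner y x
  norm_eq_sqrt_norm_inner_self x : ‖x‖ = √‖inner x x‖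

/-- `M_J`: the closure in `E` of the set of finite sums `Σᵢ mᵢ·xᵢ` with `mᵢ ∈ E`, `xᵢ ∈ J`. -/
def idealSubmodule {A : Type*} [NonUnitalCStarAlgebra A]
    (J : TwoSidedIdeal A) (E : Type*) [NormedAddCommGroup E] [SMul Aᵐᵒᵖ E] : Set E :=
  closure (AddSubmonoid.closure {y : E | ∃ m : E, ∃ x ∈ J, y = m <• x} : Set E)


namespace OldCStarModule

variable {A : Type*} [NonUnitalCStarAlgebra A] [PartialOrder A]
  {E : Type*} [NormedAddCommGroup E] [Module ℂ E] [SMul Aᵐᵒᵖ E] [OldCStarModule A E]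

theorem norm_sq_eq (m : E) : ‖m‖ ^ 2 = ‖(inner A m m : A)‖ := by
  rw [norm_eq_sqrt_norm_inner_self m, Real.sq_sqrt (norm_nonneg _)]

theorem inner_sub_right (m n n' : E) :
    (inner A m (n - n') : A) = inner A m n - inner A m n' :=
  map_sub (AddMonoidHom.mk' (fun n => (inner A m n : A)) fun _ _ => inner_add_right) n n'

theorem inner_sub_left (m m' n : E) :
    (inner A (m - m') n : A) = inner A m n - inner A m' n := by
  rw [← star_inner n, inner_sub_right, star_sub, star_inner, star_inner]

theorem inner_op_smul_left (a : A) (m n : E) :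
    (inner A (m <• a) n : A) = star a * inner A m n := by
  rw [← star_inner n, inner_op_smul_right, star_mul, star_inner]

theorem norm_sub_op_smul_sq {b : A} (hb : IsSelfAdjoint b) (m : E) :
    ‖m - m <• b‖ ^ 2 =
      ‖inner A m m - inner A m m * b - b * inner A m m + b * inner A m m * b‖ := by
  rw [norm_sq_eq]
  congr 1
  simp only [inner_sub_right, inner_sub_left, inner_op_smul_right, inner_op_smul_left,
    hb.star_eq]
  noncomm_ring

end OldCStarModule

section ResolventApproxUnit

variable {A : Type*} [NonUnitalCStarAlgebra A]

/-- The parameter is a natural number so that membership in an ideal that need not be closed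
follows from `nsmul_sub_mul_resolventApproxUnit`. -/
noncomputable def resolventApproxUnit (a : A) (n : ℕ) : A :=
  cfcₙ (fun t : ℝ => n * t / (1 + n * t)) a

theorem isSelfAdjoint_resolventApproxUnit (a : A) (n : ℕ) :
    IsSelfAdjoint (resolventApproxUnit a n) :=
  cfcₙ_predicate _ a

variable [PartialOrder A] [StarOrderedRing A] {a : A}

theorem one_add_mul_ne_zero_of_mem_quasispectrum (ha : 0 ≤ a) (n : ℕ) {t : ℝ}
    (ht : t ∈ quasispectrum ℝ a) : 1 + n * t ≠ 0 := by
  have := quasispectrum_nonneg_of_nonneg a ha t ht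
  positivity

theorem continuousOn_resolvent (ha : 0 ≤ a) (n : ℕ) :
    ContinuousOn (fun t : ℝ => n * t / (1 + n * t)) (quasispectrum ℝ a) :=
  ContinuousOn.div (by fun_prop) (by fun_prop) fun _ ↦
    one_add_mul_ne_zero_of_mem_quasispectrum ha n

theorem nsmul_sub_mul_resolventApproxUnit (ha : 0 ≤ a) (n : ℕ) :
    n • (a - a * resolventApproxUnit a n) = resolventApproxUnit a n := by
  set g := fun t : ℝ => n * t / (1 + n * t)
  have hg : ContinuousOn g (quasispectrum ℝ a) := continuousOn_resolvent ha n
  have hg0 : g 0 = 0 := by simp [g]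
  have key : (quasispectrum ℝ a).EqOn (fun t => n • (t - t * g t)) g := fun t ht => by
    have := one_add_mul_ne_zero_of_mem_quasispectrum ha n ht
    simp only [g, nsmul_eq_mul]
    field_simp
    ring
  calc n • (a - a * cfcₙ g a) = cfcₙ (fun t => n • (t - t * g t)) a := by
        rw [cfcₙ_smul n _ a, cfcₙ_sub _ _ a, cfcₙ_mul _ _ a, cfcₙ_id' ℝ a]
    _ = cfcₙ g a := cfcₙ_congr key

theorem resolventApproxUnit_mem {J : TwoSidedIdeal A} (ha : 0 ≤ a) (haJ : a ∈ J) (n : ℕ) :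
    resolventApproxUnit a n ∈ J := by
  rw [← nsmul_sub_mul_resolventApproxUnit ha n]
  exact nsmul_mem (J.sub_mem haJ (J.mul_mem_right _ _ haJ)) n

theorem norm_sub_mul_resolventApproxUnit_le (ha : 0 ≤ a) {n : ℕ} (hn : 0 < n) :
    ‖a - a * resolventApproxUnit a n - resolventApproxUnit a n * a +
      resolventApproxUnit a n * a * resolventApproxUnit a n‖ ≤ (n : ℝ)⁻¹ := by
  set g := fun t : ℝ => n * t / (1 + n * t)
  have hg : ContinuousOn g (quasispectrum ℝ a) := continuousOn_resolvent ha n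
  have hg0 : g 0 = 0 := by simp [g]
  have hcfc : a - a * cfcₙ g a - cfcₙ g a * a + cfcₙ g a * a * cfcₙ g a =
      cfcₙ (fun t => t - t * g t - g t * t + g t * t * g t) a := by
    rw [cfcₙ_add _ _ a, cfcₙ_sub _ _ a, cfcₙ_sub _ _ a, cfcₙ_mul _ _ a, cfcₙ_mul _ _ a,
      cfcₙ_mul _ _ a, cfcₙ_mul _ _ a, cfcₙ_id' ℝ a]
  rw [resolventApproxUnit, hcfc]
  refine norm_cfcₙ_le fun t ht => ?_
  have ht0 := quasispectrum_nonneg_of_nonneg a ha t ht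
  have hd : 0 < 1 + n * t := by positivity
  have : t - t * g t - g t * t + g t * t * g t = t / (1 + n * t) ^ 2 := by
    simp only [g]
    field_simp
    ring
  rw [this, Real.norm_of_nonneg (by positivity), div_le_iff₀ (by positivity),
    inv_mul_eq_div, le_div_iff₀ (by positivity)]
  nlinarith [sq_nonneg (n * t)]

end ResolventApproxUnit

theorem OldCStarModule.mem_idealSubmodule_of_inner_self_mem {A : Type*} [NonUnitalCStarAlgebra A]
    [PartialOrder A] [StarOrderedRing A] {E : Type*} [NormedAddCommGroup E] [Module ℂ E]
    [SMul Aᵐᵒᵖ E] [OldCStarModule A E] {J : TwoSidedIdeal A} {m : E}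
    (hm : (inner A m m : A) ∈ J) : m ∈ idealSubmodule J E := by
  set a : A := inner A m m
  have ha : 0 ≤ a := OldCStarModule.inner_self_nonneg
  rw [idealSubmodule, Metric.mem_closure_iff]
  intro ε hε
  obtain ⟨n, hn⟩ := exists_nat_one_div_lt (pow_pos hε 2)
  set e := resolventApproxUnit a (n + 1)
  refine ⟨m <• e, AddSubmonoid.subset_closure ⟨m, e, resolventApproxUnit_mem ha hm _, rfl⟩, ?_⟩
  have hsq : ‖m - m <• e‖ ^ 2 < ε ^ 2 := by
    rw [OldCStarModule.norm_sub_op_smul_sq (isSelfAdjoint_resolventApproxUnit a _)]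
    calc _ ≤ ((n + 1 : ℕ) : ℝ)⁻¹ := norm_sub_mul_resolventApproxUnit_le ha n.succ_pos
      _ < ε ^ 2 := by simpa using hn
  rw [dist_eq_norm]
  exact lt_of_pow_lt_pow_left₀ 2 hε.le hsq

theorem rep_mem_idealSubmodule_general
    {A : Type*} [NonUnitalCStarAlgebra A] [PartialOrder A] [StarOrderedRing A]
    {E : Type*} [NormedAddCommGroup E] [Module ℂ E] [SMul Aᵐᵒᵖ E] [OldCStarModule A E]
    (J : TwoSidedIdeal A)
    (f : E → A)
    (x : A) (hx : x ∈ J) (mx : E) (hmx : ∀ m : E, f m * x = (inner A m mx : A)) :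
    mx ∈ idealSubmodule J E := by
  apply OldCStarModule.mem_idealSubmodule_of_inner_self_mem
  rw [← hmx mx]
  exact J.mul_mem_left _ _ hx

/-- If `f : M → A` is a bounded additive anti-`A`-linear functional on a Hilbert C*-module `M`
over `A`, and for every `x` in the closed two-sided ideal `J ⊆ A` the functional `f·x` is
represented by an element of `M`, then every such representing element lies in `M_J`
(this expresses `(M^J)_J = M_J`). -/
theorem rep_mem_idealSubmodule
    {A : Type*} [NonUnitalCStarAlgebra A] [PartialOrder A] [StarOrderedRing A]
    {E : Type*} [NormedAddCommGroup E] [Module ℂ E] [SMul Aᵐᵒᵖ E] [OldCStarModule A E]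
    [CompleteSpace E]
    (J : TwoSidedIdeal A) (hJclosed : IsClosed (J : Set A))
    (f : E → A)
    (hf_add : ∀ m n : E, f (m + n) = f m + f n)
    (hf_bdd : ∃ C : ℝ, ∀ m : E, ‖f m‖ ≤ C * ‖m‖)
    (hf_antilin : ∀ (m : E) (a : A), f (m <• a) = star a * f m)
    (hrep : ∀ x ∈ J, ∃ mx : E, ∀ m : E, f m * x = (inner A m mx : A))
    (x : A) (hx : x ∈ J) (mx : E) (hmx : ∀ m : E, f m * x = (inner A m mx : A)) :
    mx ∈ idealSubmodule J E :=
  rep_mem_idealSubmodule_general J f x hx mx hmx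
end

section
/- Let A be a C*-algebra, J ⊆ A an essential ideal, and let M, N be Hilbert C*-modules over A. If T : M → N is a J-adjointable A-operator, then its restriction T|_{M_J} : M_J → N_J is adjointable: there exists an A-operator S : N_J → M_J with ⟪S n, m⟫ = ⟪n, T m⟫ for all m ∈ M_J and n ∈ N_J. -/
/-!
An adjoint of `T` on `N_J` is assembled vector by vector. Call `s` an adjoint vector of `n` if
`⟪s, m⟫ = ⟪n, T m⟫` for all `m`; it is unique by nondegeneracy of the inner product and has norm at
most `C ‖n‖` (for `‖T m‖ ≤ C ‖m‖`) by Cauchy–Schwarz. The vectors `n` having an adjoint vector in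
`M_J` form an additive submonoid, which is closed because adjoint vectors of a Cauchy sequence form
a Cauchy sequence in the complete module `M`. It contains the generators `n <• (x * z)` with
`x, z ∈ J`: `J`-adjointability gives `m₀` with `⟪m₀, m⟫ = ⟪n <• x, T m⟫`, and `m₀ <• z ∈ M_J`.
Finally every `x ∈ J` is a limit of products `x * z` with `z ∈ J`: for `a = x⋆x`, `c ‖a‖ ≤ 1` and
`1 - z = (1 - c a)^j` in the unitization, the functional calculus bounds `‖x - x * z‖²` by
`sup_{t ∈ [0, ‖a‖]} t (1 - c t)^(2j) ≤ 1 / (2 j c)`.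
-/

open scoped RightActions

/-- The `CStarModule` class as it stood in Mathlib of December 2024: a right `Aᵐᵒᵖ`-action
and an inner product that is `A`-linear in the second variable. -/
class RightCStarModule (A E : Type*) [NonUnitalSemiring A] [StarRing A] [Module ℂ A]
    [AddCommGroup E] [Module ℂ E] [PartialOrder A] [SMul Aᵐᵒᵖ E] [Norm A] [Norm E]
    extends Inner A E where
  inner_add_right {x} {y} {z} : inner x (y + z) = inner x y + inner x z
  inner_self_nonneg {x} : 0 ≤ inner x x
  inner_self {x} : inner x x = 0 ↔ x = 0
  inner_op_smul_right {a : A} {x y : E} : inner x (y <• a) = inner x y * a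
  inner_smul_right_complex {z : ℂ} {x} {y} : inner x (z • y) = z • inner x y
  star_inner x y : star (inner x y) = inner y x
  norm_eq_sqrt_norm_inner_self x : ‖x‖ = √‖inner x x‖

lemma CauchySeq.of_dist_le_mul {α β : Type*} [PseudoMetricSpace α] [PseudoMetricSpace β]
    {u : ℕ → α} {v : ℕ → β} {C : ℝ} (hC : 0 ≤ C) (hu : CauchySeq u)
    (h : ∀ k l, dist (v k) (v l) ≤ C * dist (u k) (u l)) : CauchySeq v := by
  obtain ⟨b, hb₀, hbu, hb⟩ := cauchySeq_iff_le_tendsto_0.1 hu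
  refine cauchySeq_iff_le_tendsto_0.2 ⟨fun N => C * b N, fun N => mul_nonneg hC (hb₀ N),
    fun k l N hk hl => (h k l).trans (mul_le_mul_of_nonneg_left (hbu k l N hk hl) hC), ?_⟩
  simpa using hb.const_mul C

lemma two_mul_mul_one_sub_pow_le {s : ℝ} (hs₀ : 0 ≤ s) (hs₁ : s ≤ 1) (j : ℕ) :
    2 * j * s * (1 - s) ^ (2 * j) ≤ 1 := by
  have hbernoulli : 1 + (2 * j : ℕ) * s ≤ (1 + s) ^ (2 * j) := one_add_mul_le_pow (by linarith) _
  have hprod : (1 + s) ^ (2 * j) * (1 - s) ^ (2 * j) ≤ 1 := by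
    rw [← mul_pow]; exact pow_le_one₀ (by nlinarith) (by nlinarith)
  have : 0 ≤ (1 - s) ^ (2 * j) := pow_nonneg (by linarith) _
  push_cast at hbernoulli
  nlinarith

open Polynomial in
lemma two_mul_mul_norm_mul_one_sub_smul_pow_sq_le {B : Type*} [CStarAlgebra B] [PartialOrder B]
    [StarOrderedRing B] (y : B) {c : ℝ} (hc₀ : 0 < c) (hc : c * ‖star y * y‖ ≤ 1) (j : ℕ) :
    2 * j * c * ‖y * (1 - c • (star y * y)) ^ j‖ ^ 2 ≤ 1 := by
  nontriviality B
  set a := star y * y with ha_def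
  have ha : 0 ≤ a := star_mul_self_nonneg y
  set p := 1 - c • a
  have hp : IsSelfAdjoint p := .sub (.one _) (.smul (.all c) ha.isSelfAdjoint)
  have hnorm : ‖y * p ^ j‖ ^ 2 = ‖p ^ j * a * p ^ j‖ := by
    rw [sq, ← CStarRing.norm_star_mul_self, star_mul, (hp.pow j).star_eq, ha_def]
    noncomm_ring
  have hcfc : p ^ j * a * p ^ j = cfc (fun t : ℝ => t * (1 - c * t) ^ (2 * j)) a := by
    set q : ℝ[X] := (1 - C c * X) ^ j * X * (1 - C c * X) ^ j
    rw [show (fun t : ℝ => t * (1 - c * t) ^ (2 * j)) = q.eval by ext; simp [q]; ring,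
      cfc_polynomial q a]
    simp [q, p, Algebra.smul_def]
  rcases Nat.eq_zero_or_pos j with rfl | hj
  · simp
  have hjc : 0 < 2 * j * c := mul_pos (mul_pos two_pos (Nat.cast_pos.2 hj)) hc₀
  have hbound : ‖p ^ j * a * p ^ j‖ ≤ (2 * j * c)⁻¹ := by
    rw [hcfc]
    refine norm_cfc_le (by positivity) fun t ht => ?_
    have ht₀ : 0 ≤ t := spectrum_nonneg_of_nonneg ha ht
    have ht₁ : c * t ≤ 1 := (mul_le_mul_of_nonneg_left ((Real.le_norm_self t).trans
      (spectrum.norm_le_norm_of_mem ht)) hc₀.le).trans hc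
    have := two_mul_mul_one_sub_pow_le (by positivity) ht₁ j
    rw [Real.norm_of_nonneg (mul_nonneg ht₀ (pow_nonneg (by linarith) _))]
    calc t * (1 - c * t) ^ (2 * j)
        = (2 * j * c)⁻¹ * (2 * j * (c * t) * (1 - c * t) ^ (2 * j)) := by field_simp
      _ ≤ (2 * j * c)⁻¹ * 1 := by gcongr
      _ = (2 * j * c)⁻¹ := mul_one _
  rw [hnorm]
  calc 2 * j * c * ‖p ^ j * a * p ^ j‖ ≤ 2 * j * c * (2 * j * c)⁻¹ := by gcongr
    _ = 1 := mul_inv_cancel₀ hjc.ne'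

namespace TwoSidedIdeal

variable {A : Type*} [NonUnitalCStarAlgebra A] (J : TwoSidedIdeal A)

lemma exists_mem_one_sub_pow_eq {b : A} (hb : b ∈ J) (j : ℕ) :
    ∃ z ∈ J, (1 - (b : Unitization ℂ A)) ^ j = 1 - z := by
  induction j with
  | zero => exact ⟨0, J.zero_mem, by simp⟩
  | succ j ih =>
    obtain ⟨z, hz, hzj⟩ := ih
    refine ⟨z + b - b * z, J.sub_mem (J.add_mem hz hb) (J.mul_mem_left b z hz), ?_⟩
    rw [pow_succ', hzj]
    push_cast
    noncomm_ring

lemma mem_closure_image_mul_left [PartialOrder A] [StarOrderedRing A] {x : A} (hx : x ∈ J) :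
    x ∈ closure ((x * ·) '' (J : Set A)) := by
  refine Metric.mem_closure_iff.2 fun ε hε => ?_
  set c := (‖star x * x‖ + 1)⁻¹
  have hc₀ : 0 < c := by positivity
  have hc : c * ‖star x * x‖ ≤ 1 := inv_mul_le_one_of_le₀ (by linarith) (by positivity)
  obtain ⟨j, hj⟩ := exists_nat_gt (2 * c * ε ^ 2)⁻¹
  have hb : c • (star x * x) ∈ J := by rw [← smul_mul_assoc]; exact J.mul_mem_left _ _ hx
  obtain ⟨z, hz, hzj⟩ := J.exists_mem_one_sub_pow_eq hb j
  refine ⟨x * z, ⟨z, hz, rfl⟩, ?_⟩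
  have key := two_mul_mul_norm_mul_one_sub_smul_pow_sq_le (x : Unitization ℂ A) hc₀
    (by rwa [← Unitization.inr_star, ← Unitization.inr_mul, Unitization.norm_inr]) j
  rw [← Unitization.inr_star, ← Unitization.inr_mul, ← Unitization.inr_smul, hzj, mul_sub,
    mul_one, ← Unitization.inr_mul, ← Unitization.inr_sub, Unitization.norm_inr] at key
  rw [dist_eq_norm]
  refine (pow_lt_pow_iff_left₀ (norm_nonneg _) hε.le two_ne_zero).1 ?_
  refine lt_of_mul_lt_mul_left (a := 2 * j * c) ?_ (by positivity)
  rw [inv_lt_iff_one_lt_mul₀ (by positivity)] at hj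
  linarith

end TwoSidedIdeal

namespace RightCStarModule

variable {A : Type*} [NonUnitalCStarAlgebra A] [PartialOrder A]
variable {E : Type*} [NormedAddCommGroup E] [Module ℂ E] [SMul Aᵐᵒᵖ E] [RightCStarModule A E]

lemma inner_add_left {x y z : E} : inner A (x + y) z = inner A x z + inner A y z := by
  rw [← star_inner, inner_add_right, star_add, star_inner, star_inner]

lemma inner_op_smul_left {a : A} {x y : E} : inner A (x <• a) y = star a * inner A x y := by
  rw [← star_inner, inner_op_smul_right, star_mul, star_inner]

lemma inner_smul_left_complex {z : ℂ} {x y : E} : inner A (z • x) y = star z • inner A x y := by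
  rw [← star_inner, inner_smul_right_complex, star_smul, star_inner]

/-- With conjugated scalars, the flipped inner product `(x, y) ↦ ⟪y, x⟫` and the left action
`a • x = x <• star a`, a right Hilbert module becomes a `CStarModule` in Mathlib's sense. -/
def Flip (E : Type*) : Type _ := E

instance : AddCommGroup (Flip E) := inferInstanceAs (AddCommGroup E)
instance : Module ℂ (Flip E) := Module.compHom E (starRingEnd ℂ)
instance : Norm (Flip E) := inferInstanceAs (Norm E)
instance : SMul A (Flip E) := ⟨fun a (x : E) => x <• star a⟩
instance : Inner A (Flip E) := ⟨fun (x y : E) => inner A y x⟩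

instance : CStarModule A (Flip E) where
  inner_add_right := inner_add_left (E := E)
  inner_self_nonneg := inner_self_nonneg (E := E)
  inner_self := inner_self (E := E)
  inner_op_smul_right {a x y} := (inner_op_smul_left (A := A) (E := E) (x := y) (y := x)).trans
    (congrArg (· * _) (star_star a))
  inner_smul_right_complex {z x y} :=
    (inner_smul_left_complex (A := A) (E := E) (z := starRingEnd ℂ z) (x := y) (y := x)).trans
    (congrArg (· • _) (star_star z))
  star_inner x y := star_inner (A := A) (E := E) y x
  norm_eq_sqrt_norm_inner_self x := norm_eq_sqrt_norm_inner_self (A := A) (E := E) x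

lemma inner_sub_left {x y z : E} : inner A (x - y) z = inner A x z - inner A y z :=
  CStarModule.inner_sub_right (A := A) (E := Flip E) (x := z) (y := x) (z := y)

lemma inner_zero_left {x : E} : inner A (0 : E) x = 0 :=
  CStarModule.inner_zero_right (A := A) (E := Flip E) (x := x)

variable (A) in
lemma norm_sq_eq (x : E) : ‖x‖ ^ 2 = ‖inner A x x‖ :=
  CStarModule.norm_sq_eq (A := A) (E := Flip E) (x := x)

variable (A E) in
abbrev normedSpace : NormedSpace ℂ E where
  norm_smul_le c x := le_of_eq <| by
    simp [norm_eq_sqrt_norm_inner_self (A := A), inner_smul_left_complex, inner_smul_right_complex,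
      norm_smul, ← mul_assoc]

lemma ext_inner_left {s t : E} (h : ∀ w : E, inner A s w = inner A t w) : s = t := by
  rw [← sub_eq_zero, ← inner_self (A := A), inner_sub_left, h, sub_self]

lemma add_op_smul (m m' : E) (a : A) : (m + m') <• a = m <• a + m' <• a :=
  ext_inner_left (A := A) fun w => by simp only [inner_op_smul_left, inner_add_left, mul_add]

lemma op_smul_add (m : E) (a b : A) : m <• (a + b) = m <• a + m <• b :=
  ext_inner_left (A := A) fun w => by
    simp only [inner_op_smul_left, inner_add_left, star_add, add_mul]

lemma op_smul_mul (m : E) (a b : A) : m <• (a * b) = (m <• a) <• b :=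
  ext_inner_left (A := A) fun w => by simp only [inner_op_smul_left, star_mul, mul_assoc]

lemma norm_op_smul_le (m : E) (a : A) : ‖m <• a‖ ≤ ‖m‖ * ‖a‖ := by
  refine (pow_le_pow_iff_left₀ (norm_nonneg _) (by positivity) two_ne_zero).1 ?_
  calc ‖m <• a‖ ^ 2 = ‖star a * (inner A m m * a)‖ := by
        rw [norm_sq_eq A, inner_op_smul_left, inner_op_smul_right]
    _ ≤ ‖a‖ * (‖inner A m m‖ * ‖a‖) := by
        grw [norm_mul_le, norm_mul_le, norm_star]
    _ = (‖m‖ * ‖a‖) ^ 2 := by rw [← norm_sq_eq]; ring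

def rightActionHom (a : A) : E →+ E := AddMonoidHom.mk' (· <• a) (add_op_smul · · a)

lemma continuous_rightAction (a : A) : Continuous fun m : E => m <• a :=
  (AddMonoidHomClass.lipschitz_of_bound (rightActionHom (E := E) a) ‖a‖ fun m =>
    (norm_op_smul_le m a).trans_eq (mul_comm _ _)).continuous

lemma continuous_orbitMap (m : E) : Continuous fun a : A => m <• a :=
  (AddMonoidHomClass.lipschitz_of_bound (AddMonoidHom.mk' (m <• ·) (op_smul_add m)) ‖m‖
    (norm_op_smul_le m)).continuous

variable [StarOrderedRing A]

lemma norm_inner_le (x y : E) : ‖inner A x y‖ ≤ ‖x‖ * ‖y‖ :=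
  (CStarModule.norm_inner_le (A := A) (Flip E) (x := y) (y := x)).trans_eq (mul_comm _ _)

lemma continuous_inner_left (m : E) : Continuous fun s : E => inner A s m :=
  (AddMonoidHomClass.lipschitz_of_bound (AddMonoidHom.mk' (inner A · m) fun _ _ => inner_add_left)
    ‖m‖ fun s => (norm_inner_le s m).trans_eq (mul_comm _ _)).continuous

end RightCStarModule

section IdealSubmodule

open RightCStarModule

variable {A : Type*} [NonUnitalCStarAlgebra A] (J : TwoSidedIdeal A)
variable {E : Type*} [NormedAddCommGroup E] [SMul Aᵐᵒᵖ E]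

lemma isClosed_idealSubmodule : IsClosed (idealSubmodule J E) := isClosed_closure

variable {J}

lemma op_smul_mem_idealSubmodule_of_mem (m : E) {x : A} (hx : x ∈ J) :
    m <• x ∈ idealSubmodule J E :=
  subset_closure (AddSubmonoid.subset_closure ⟨m, x, hx, rfl⟩)

lemma zero_mem_idealSubmodule : (0 : E) ∈ idealSubmodule J E :=
  (AddSubmonoid.closure _).topologicalClosure.zero_mem

lemma add_mem_idealSubmodule {p q : E} (hp : p ∈ idealSubmodule J E)
    (hq : q ∈ idealSubmodule J E) : p + q ∈ idealSubmodule J E :=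
  (AddSubmonoid.closure _).topologicalClosure.add_mem hp hq

lemma op_smul_mem_idealSubmodule [PartialOrder A] [Module ℂ E] [RightCStarModule A E] {s : E}
    (hs : s ∈ idealSubmodule J E) (a : A) : s <• a ∈ idealSubmodule J E := by
  refine map_mem_closure (continuous_rightAction a) hs (AddSubmonoid.closure_le.2 ?_ :
    AddSubmonoid.closure _ ≤ (AddSubmonoid.closure _).comap (rightActionHom a))
  rintro _ ⟨m, x, hx, rfl⟩
  exact AddSubmonoid.subset_closure ⟨m, x * a, J.mul_mem_right x a hx, (op_smul_mul m x a).symm⟩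

end IdealSubmodule

namespace RightCStarModule

variable {A : Type*} [NonUnitalCStarAlgebra A] [PartialOrder A]
variable {E : Type*} [NormedAddCommGroup E] [Module ℂ E] [SMul Aᵐᵒᵖ E] [RightCStarModule A E]
variable {F : Type*} [NormedAddCommGroup F] [Module ℂ F] [SMul Aᵐᵒᵖ F] [RightCStarModule A F]

variable (A) in
def IsAdjointVector (T : E → F) (n : F) (s : E) : Prop :=
  ∀ m : E, inner A s m = inner A n (T m)

def IsJAdjointable (J : TwoSidedIdeal A) (T : E → F) : Prop :=
  ∀ n : F, ∀ x ∈ J, ∃ m₀ : E, ∀ m : E, inner A (T m) n * x = inner A m m₀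

namespace IsAdjointVector

variable {T : E → F} {n n' : F} {s s' : E}

lemma zero : IsAdjointVector A T 0 0 := fun m => by rw [inner_zero_left, inner_zero_left]

lemma add (h : IsAdjointVector A T n s) (h' : IsAdjointVector A T n' s') :
    IsAdjointVector A T (n + n') (s + s') := fun m => by
  rw [inner_add_left, inner_add_left, h m, h' m]

lemma sub (h : IsAdjointVector A T n s) (h' : IsAdjointVector A T n' s') :
    IsAdjointVector A T (n - n') (s - s') := fun m => by
  rw [inner_sub_left, inner_sub_left, h m, h' m]

lemma op_smul (h : IsAdjointVector A T n s) (a : A) : IsAdjointVector A T (n <• a) (s <• a) :=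
  fun m => by rw [inner_op_smul_left, inner_op_smul_left, h m]

lemma unique (h : IsAdjointVector A T n s) (h' : IsAdjointVector A T n s') : s = s' :=
  ext_inner_left (A := A) fun m => (h m).trans (h' m).symm

lemma norm_le [StarOrderedRing A] {C : ℝ} (hC : 0 ≤ C) (hT : ∀ m, ‖T m‖ ≤ C * ‖m‖)
    (h : IsAdjointVector A T n s) : ‖s‖ ≤ C * ‖n‖ := by
  have : ‖s‖ ^ 2 ≤ C * ‖n‖ * ‖s‖ := calc
    ‖s‖ ^ 2 = ‖inner A n (T s)‖ := by rw [norm_sq_eq A, h s]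
    _ ≤ ‖n‖ * (C * ‖s‖) := (norm_inner_le n (T s)).trans (by gcongr; exact hT s)
    _ = C * ‖n‖ * ‖s‖ := by ring
  rcases (norm_nonneg s).eq_or_lt with hs | hs
  · rw [← hs]; positivity
  · exact le_of_mul_le_mul_right (by rwa [sq] at this) hs

end IsAdjointVector

lemma isAdjointVector_op_smul_of_inner_mul_eq {T : E → F} {n : F} {x : A} {m₀ : E}
    (h : ∀ m, inner A (T m) n * x = inner A m m₀) : IsAdjointVector A T (n <• x) m₀ := fun m => by
  rw [inner_op_smul_left, ← star_inner m m₀, ← h m, star_mul, star_inner]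

variable (J : TwoSidedIdeal A) (T : E → F)

def adjointDomain : AddSubmonoid F where
  carrier := {n | ∃ s ∈ idealSubmodule J E, IsAdjointVector A T n s}
  zero_mem' := ⟨0, zero_mem_idealSubmodule, .zero⟩
  add_mem' := fun ⟨s, hs, h⟩ ⟨s', hs', h'⟩ => ⟨s + s', add_mem_idealSubmodule hs hs', h.add h'⟩

variable {J T}

lemma isClosed_adjointDomain [StarOrderedRing A] [CompleteSpace E] {C : ℝ} (hC : 0 ≤ C)
    (hT : ∀ m, ‖T m‖ ≤ C * ‖m‖) : IsClosed (adjointDomain J T : Set F) := by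
  refine isClosed_of_closure_subset fun n hn => ?_
  obtain ⟨u, hu, hlim⟩ := mem_closure_iff_seq_limit.1 hn
  choose s hs_mem hs_adj using hu
  have hcauchy : CauchySeq s := hlim.cauchySeq.of_dist_le_mul hC fun k l => by
    simpa only [dist_eq_norm] using ((hs_adj k).sub (hs_adj l)).norm_le hC hT
  obtain ⟨s₀, hs₀⟩ := cauchySeq_tendsto_of_complete hcauchy
  refine ⟨s₀, (isClosed_idealSubmodule J).mem_of_tendsto hs₀ (.of_forall hs_mem), fun m => ?_⟩
  have h₁ := ((continuous_inner_left (A := A) m).tendsto s₀).comp hs₀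
  have h₂ := ((continuous_inner_left (A := A) (T m)).tendsto n).comp hlim
  exact tendsto_nhds_unique h₁ (by simpa only [Function.comp_def, hs_adj _ m] using h₂)

lemma op_smul_mul_mem_adjointDomain {n : F} {x z : A} {m₀ : E}
    (h : ∀ m, inner A (T m) n * x = inner A m m₀) (hz : z ∈ J) :
    n <• (x * z) ∈ adjointDomain J T :=
  ⟨m₀ <• z, op_smul_mem_idealSubmodule_of_mem m₀ hz, by
    rw [op_smul_mul]; exact (isAdjointVector_op_smul_of_inner_mul_eq h).op_smul z⟩

variable [StarOrderedRing A] [CompleteSpace E] {C : ℝ}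

lemma op_smul_mem_adjointDomain (hC : 0 ≤ C) (hT : ∀ m, ‖T m‖ ≤ C * ‖m‖)
    (hT_Jadj : IsJAdjointable J T) (n : F) {x : A} (hx : x ∈ J) :
    n <• x ∈ adjointDomain J T := by
  obtain ⟨m₀, hm₀⟩ := hT_Jadj n x hx
  refine (isClosed_adjointDomain hC hT).closure_subset
    (map_mem_closure (f := (n <• ·)) (continuous_orbitMap n) (J.mem_closure_image_mul_left hx) ?_)
  rintro _ ⟨z, hz, rfl⟩
  exact op_smul_mul_mem_adjointDomain hm₀ hz

lemma idealSubmodule_subset_adjointDomain (hC : 0 ≤ C) (hT : ∀ m, ‖T m‖ ≤ C * ‖m‖)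
    (hT_Jadj : IsJAdjointable J T) : idealSubmodule J F ⊆ adjointDomain J T :=
  closure_minimal (AddSubmonoid.closure_le.2 fun _ ⟨n, _, hx, hy⟩ =>
    hy ▸ op_smul_mem_adjointDomain hC hT hT_Jadj n hx) (isClosed_adjointDomain hC hT)

end RightCStarModule

theorem restriction_adjointable_general
    {A : Type*} [NonUnitalCStarAlgebra A] [PartialOrder A] [StarOrderedRing A]
    {E : Type*} [NormedAddCommGroup E] [Module ℂ E] [SMul Aᵐᵒᵖ E] [RightCStarModule A E]
    [CompleteSpace E]
    {F : Type*} [NormedAddCommGroup F] [Module ℂ F] [SMul Aᵐᵒᵖ F] [RightCStarModule A F]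
    (J : TwoSidedIdeal A)
    (T : E →L[ℂ] F)
    (hT_Jadj : ∀ (n : F), ∀ x ∈ J, ∃ m₀ : E, ∀ m : E,
      (inner A (T m) n : A) * x = inner A m m₀) :
    ∃ S : F → E,
      (∀ n ∈ idealSubmodule J F, S n ∈ idealSubmodule J E) ∧
      (∀ n₁ ∈ idealSubmodule J F, ∀ n₂ ∈ idealSubmodule J F, S (n₁ + n₂) = S n₁ + S n₂) ∧
      (∀ n ∈ idealSubmodule J F, ∀ a : A, S (n <• a) = S n <• a) ∧
      (∃ C : ℝ, ∀ n ∈ idealSubmodule J F, ‖S n‖ ≤ C * ‖n‖) ∧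
      (∀ n ∈ idealSubmodule J F, ∀ m ∈ idealSubmodule J E,
        (inner A (S n) m : A) = inner A n (T m)) := by
  let := RightCStarModule.normedSpace A E
  let := RightCStarModule.normedSpace A F
  obtain ⟨C, hC, hT⟩ := T.bound
  have hdomain : ∀ n ∈ idealSubmodule J F, ∃ s ∈ idealSubmodule J E,
      RightCStarModule.IsAdjointVector A T n s :=
    fun n hn => RightCStarModule.idealSubmodule_subset_adjointDomain hC.le hT hT_Jadj hn
  choose! S hS_mem hS_adj using hdomain
  refine ⟨S, hS_mem, fun n₁ h₁ n₂ h₂ => ?_, fun n hn a => ?_,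
    ⟨C, fun n hn => (hS_adj n hn).norm_le hC.le hT⟩, fun n hn m _ => hS_adj n hn m⟩
  · exact (hS_adj _ (add_mem_idealSubmodule h₁ h₂)).unique ((hS_adj n₁ h₁).add (hS_adj n₂ h₂))
  · exact (hS_adj _ (op_smul_mem_idealSubmodule hn a)).unique ((hS_adj n hn).op_smul a)

/-- If `J ⊆ A` is an essential closed two-sided ideal and `T : M → N` is a `J`-adjointable
`A`-operator between Hilbert C*-modules over `A`, then the restriction `T|_{M_J} : M_J → N_J`
is adjointable: there is an `A`-operator `S : N_J → M_J` with `⟪S n, m⟫ = ⟪n, T m⟫` for all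
`m ∈ M_J`, `n ∈ N_J`. -/
theorem restriction_adjointable
    {A : Type*} [NonUnitalCStarAlgebra A] [PartialOrder A] [StarOrderedRing A]
    {E : Type*} [NormedAddCommGroup E] [Module ℂ E] [SMul Aᵐᵒᵖ E] [RightCStarModule A E]
    [CompleteSpace E]
    {F : Type*} [NormedAddCommGroup F] [Module ℂ F] [SMul Aᵐᵒᵖ F] [RightCStarModule A F]
    [CompleteSpace F]
    (J : TwoSidedIdeal A) (hJclosed : IsClosed (J : Set A))
    (hJess : ∀ a : A, (∀ x ∈ J, a * x = 0) → a = 0)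
    (T : E →L[ℂ] F) (hT_mod : ∀ (m : E) (a : A), T (m <• a) = T m <• a)
    (hT_Jadj : ∀ (n : F), ∀ x ∈ J, ∃ m₀ : E, ∀ m : E,
      (inner A (T m) n : A) * x = inner A m m₀) :
    ∃ S : F → E,
      (∀ n ∈ idealSubmodule J F, S n ∈ idealSubmodule J E) ∧
      (∀ n₁ ∈ idealSubmodule J F, ∀ n₂ ∈ idealSubmodule J F, S (n₁ + n₂) = S n₁ + S n₂) ∧
      (∀ n ∈ idealSubmodule J F, ∀ a : A, S (n <• a) = S n <• a) ∧
      (∃ C : ℝ, ∀ n ∈ idealSubmodule J F, ‖S n‖ ≤ C * ‖n‖) ∧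
      (∀ n ∈ idealSubmodule J F, ∀ m ∈ idealSubmodule J E,
        (inner A (S n) m : A) = inner A n (T m)) :=
  restriction_adjointable_general J T hT_Jadj
end

section
/- Let A be a C*-algebra, J ⊆ A an essential ideal, and M a Hilbert C*-module over A. If T, S : M → M are J-adjointable A-operators, then the composition T∘S is a J-adjointable A-operator. -/
open scoped RightActions

/-- The Hilbert C⋆-module class as it stood in Mathlib of December 2024 (right `Aᵐᵒᵖ`-action,
inner product `A`-linear on the right in the second variable). -/
class CStarModuleRight (A E : Type*) [NonUnitalSemiring A] [StarRing A]
    [Module ℂ A] [AddCommGroup E] [Module ℂ E] [PartialOrder A] [SMul Aᵐᵒᵖ E] [Norm A] [Norm E]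
    extends Inner A E where
  inner_add_right {x} {y} {z} : inner x (y + z) = inner x y + inner x z
  inner_self_nonneg {x} : 0 ≤ inner x x
  inner_self {x} : inner x x = 0 ↔ x = 0
  inner_op_smul_right {a : A} {x y : E} : inner x (y <• a) = inner x y * a
  inner_smul_right_complex {z : ℂ} {x} {y} : inner x (z • y) = z • inner x y
  star_inner x y : star (inner x y) = inner y x
  norm_eq_sqrt_norm_inner_self x : ‖x‖ = √‖inner x x‖

/-- An `A`-operator `T : M → M` on a Hilbert C*-module over `A` is `J`-adjointable if for every
`n ∈ M` and `x ∈ J` there exists `m₀ ∈ M` with `⟪T m, n⟫·x = ⟪m, m₀⟫` for all `m ∈ M`. -/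
def IsJAdjointable {A : Type*} [NonUnitalCStarAlgebra A] [PartialOrder A] [StarOrderedRing A]
    {E : Type*} [NormedAddCommGroup E] [Module ℂ E] [SMul Aᵐᵒᵖ E] [CStarModuleRight A E]
    (J : TwoSidedIdeal A) (T : E →L[ℂ] E) : Prop :=
  ∀ (n : E), ∀ x ∈ J, ∃ m₀ : E, ∀ m : E, (inner A (T m) n : A) * x = inner A m m₀

/-!
Fix `n ∈ M` and `x ∈ J`. The coefficients `a ∈ A` for which `m ↦ ⟪T (S m), n⟫ * a` is represented
as `⟪m, m₀⟫` form a closed set: representing vectors satisfy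
`‖m₀ - m₀'‖² = ‖⟪T (S (m₀ - m₀')), n⟫ * (a - a')‖`, so they depend Lipschitz-continuously on `a`,
and `M` is complete. Chaining the two adjointness hypotheses shows that this set contains
`x * y` for every `y ∈ J`, in particular every `x * (x⋆ x * c)`, and functional calculus on `x⋆ x`
shows that `x` is a limit of such elements.
-/

open MulOpposite

lemma mul_one_sub_div_add_sq_sq_le_two_mul {t δ : ℝ} (ht : 0 ≤ t) (hδ : 0 < δ) :
    t * (1 - (t / (t + δ)) ^ 2) ^ 2 ≤ 2 * δ := by
  have hu₀ : 0 ≤ t / (t + δ) := by positivity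
  have hu₁ : t / (t + δ) ≤ 1 := div_le_one_of_le₀ (by linarith) (by positivity)
  have h_one_sub : 1 - t / (t + δ) = δ / (t + δ) := by field_simp; ring
  calc t * (1 - (t / (t + δ)) ^ 2) ^ 2 ≤ t * (2 * (1 - t / (t + δ))) := by
        gcongr
        have := mul_nonneg hu₀ (sub_nonneg.2 hu₁)
        nlinarith [mul_nonneg this (sub_nonneg.2 hu₁), mul_nonneg this hu₀]
    _ = 2 * δ * (t / (t + δ)) := by rw [h_one_sub]; ring
    _ ≤ 2 * δ := mul_le_of_le_one_right (by positivity) hu₁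

lemma star_sub_mul_cfcₙ_mul_sub_mul_cfcₙ {A : Type*} [NonUnitalCStarAlgebra A] (x : A)
    (g : ℝ → ℝ) (hg : Continuous g) (hg₀ : g 0 = 0) :
    star (x - x * cfcₙ g (star x * x)) * (x - x * cfcₙ g (star x * x)) =
      cfcₙ (fun t => t * (1 - g t) ^ 2) (star x * x) := by
  have hs : star (cfcₙ g (star x * x)) = cfcₙ g (star x * x) :=
    (cfcₙ_predicate g (star x * x) : IsSelfAdjoint _)
  have h_expand : (fun t => t * (1 - g t) ^ 2) =
      fun t => t - t * g t - g t * t + g t * (t * g t) := by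
    ext t; ring
  rw [h_expand, cfcₙ_add .., cfcₙ_sub .., cfcₙ_sub .., cfcₙ_mul .., cfcₙ_mul .., cfcₙ_mul ..,
    cfcₙ_mul .., cfcₙ_id' ℝ (star x * x)]
  simp only [star_sub, star_mul, hs]
  noncomm_ring

lemma exists_norm_sub_mul_star_mul_self_mul_sq_le {A : Type*} [NonUnitalCStarAlgebra A]
    [PartialOrder A] [StarOrderedRing A] (x : A) {δ : ℝ} (hδ : 0 < δ) :
    ∃ c : A, ‖x - x * (star x * x * c)‖ ^ 2 ≤ 2 * δ := by
  set k : ℝ → ℝ := fun t => t / (|t| + δ) ^ 2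
  set g : ℝ → ℝ := fun t => (t / (|t| + δ)) ^ 2
  have hden : ∀ t : ℝ, |t| + δ ≠ 0 := fun t => by positivity
  have hg : Continuous g := (continuous_id.div (by fun_prop) hden).pow 2
  -- `cfcₙ` needs `k 0 = 0`, so `g t = t * k t` vanishes to second order at `0`; still
  -- `t * (1 - g t)² ≤ 2δ` for `t ≥ 0`.
  have h_factor : star x * x * cfcₙ k (star x * x) = cfcₙ g (star x * x) := by
    have : g = fun t => t * k t := by ext t; simp only [g, k, div_pow]; ring
    rw [this, cfcₙ_mul (fun t => t) k (star x * x), cfcₙ_id' ℝ (star x * x)]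
  refine ⟨cfcₙ k (star x * x), ?_⟩
  rw [h_factor, sq, ← CStarRing.norm_star_mul_self,
    star_sub_mul_cfcₙ_mul_sub_mul_cfcₙ x g hg (by simp [g])]
  refine norm_cfcₙ_le fun t ht => ?_
  have ht₀ : 0 ≤ t := quasispectrum_nonneg_of_nonneg _ (star_mul_self_nonneg x) t ht
  simpa [g, abs_of_nonneg ht₀] using mul_one_sub_div_add_sq_sq_le_two_mul ht₀ hδ

lemma mem_closure_range_mul_star_mul_self_mul {A : Type*} [NonUnitalCStarAlgebra A]
    [PartialOrder A] [StarOrderedRing A] (x : A) :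
    x ∈ closure (Set.range fun c => x * (star x * x * c)) := by
  refine Metric.mem_closure_iff.2 fun ε hε => ?_
  obtain ⟨c, hc⟩ := exists_norm_sub_mul_star_mul_self_mul_sq_le x (δ := ε ^ 2 / 4) (by positivity)
  refine ⟨_, ⟨c, rfl⟩, ?_⟩
  rw [dist_eq_norm]
  exact lt_of_pow_lt_pow_left₀ 2 hε.le (by linarith [pow_pos hε 2])

namespace CStarModuleRight

variable {A : Type*} [NonUnitalCStarAlgebra A] [PartialOrder A]
  {E : Type*} [NormedAddCommGroup E] [Module ℂ E] [SMul Aᵐᵒᵖ E] [CStarModuleRight A E]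

/-- A right Hilbert `A`-module is a left Hilbert `Aᵐᵒᵖ`-module; this gives access to the
`CStarModule` API. -/
instance toCStarModuleMulOpposite : CStarModule Aᵐᵒᵖ E where
  inner x y := op (inner A x y)
  inner_add_right := by simp [inner_add_right]
  inner_self_nonneg := inner_self_nonneg (A := A)
  inner_self := by simp [inner_self]
  inner_op_smul_right {a x y} := by
    change op (inner A x (y <• a.unop)) = _
    rw [inner_op_smul_right, op_mul, op_unop]
  inner_smul_right_complex := by simp [inner_smul_right_complex]
  star_inner x y := by rw [← op_star, star_inner]
  norm_eq_sqrt_norm_inner_self x := by rw [norm_eq_sqrt_norm_inner_self (A := A) x, norm_op]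

lemma inner_sub_right (x y z : E) : inner A x (y - z) = inner A x y - inner A x z :=
  op_injective (CStarModule.inner_sub_right (A := Aᵐᵒᵖ) (x := x) (y := y) (z := z))

variable (A) in
lemma norm_sq_eq (x : E) : ‖x‖ ^ 2 = ‖inner A x x‖ :=
  CStarModule.norm_sq_eq Aᵐᵒᵖ

def HasAdjointVector (R : E → E) (n : E) (a : A) : Prop :=
  ∃ m₀ : E, ∀ m : E, inner A (R m) n * a = inner A m m₀

lemma hasAdjointVector_comp_mul {T S : E → E} {n p : E} {a b : A}
    (hp : ∀ m, inner A (T m) n * a = inner A m p) (hS : HasAdjointVector S p b) :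
    HasAdjointVector (T ∘ S) n (a * b) := by
  obtain ⟨q, hq⟩ := hS
  exact ⟨q, fun m => by rw [Function.comp_apply, ← mul_assoc, hp, hq]⟩

variable [StarOrderedRing A]

variable (A) in
noncomputable abbrev normedSpace : NormedSpace ℂ E :=
  .ofCore (CStarModule.normedSpaceCore Aᵐᵒᵖ)

lemma norm_inner_le (x y : E) : ‖inner A x y‖ ≤ ‖x‖ * ‖y‖ :=
  CStarModule.norm_inner_le E (A := Aᵐᵒᵖ)

lemma continuous_inner_right (x : E) : Continuous (inner A x) :=
  AddMonoidHomClass.continuous_of_bound (AddMonoidHom.mk' (inner A x) fun _ _ => inner_add_right)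
    ‖x‖ (norm_inner_le x)

lemma norm_sub_le_of_inner_mul_eq {R : E → E} {C : ℝ} (hC : 0 ≤ C)
    (hR : ∀ m, ‖R m‖ ≤ C * ‖m‖) {n w w' : E} {a a' : A}
    (hw : ∀ m, inner A (R m) n * a = inner A m w)
    (hw' : ∀ m, inner A (R m) n * a' = inner A m w') :
    ‖w - w'‖ ≤ C * ‖n‖ * ‖a - a'‖ := by
  set d := w - w'
  have h_sq : ‖d‖ * ‖d‖ ≤ C * ‖n‖ * ‖a - a'‖ * ‖d‖ :=
    calc ‖d‖ * ‖d‖ = ‖inner A (R d) n * (a - a')‖ := by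
          rw [← sq, norm_sq_eq A, mul_sub, hw, hw', inner_sub_right]
      _ ≤ ‖R d‖ * ‖n‖ * ‖a - a'‖ := by grw [norm_mul_le, norm_inner_le]
      _ ≤ C * ‖d‖ * ‖n‖ * ‖a - a'‖ := by grw [hR d]
      _ = C * ‖n‖ * ‖a - a'‖ * ‖d‖ := by ring
  rcases (norm_nonneg d).eq_or_lt with hd | hd
  · rw [← hd]; positivity
  · exact le_of_mul_le_mul_right h_sq hd

theorem isClosed_setOf_hasAdjointVector [CompleteSpace E] {R : E → E} {C : ℝ} (hC : 0 ≤ C)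
    (hR : ∀ m, ‖R m‖ ≤ C * ‖m‖) (n : E) : IsClosed {a : A | HasAdjointVector R n a} := by
  refine IsSeqClosed.isClosed fun {a} {a₀} ha ha₀ => ?_
  choose w hw using ha
  have hw_cauchy : CauchySeq w := by
    obtain ⟨b, -, hb, hb₀⟩ := cauchySeq_iff_le_tendsto_0.1 ha₀.cauchySeq
    refine cauchySeq_of_le_tendsto_0 (fun N => C * ‖n‖ * b N) (fun i j N hi hj => ?_)
      (by simpa using hb₀.const_mul (C * ‖n‖))
    rw [dist_eq_norm]
    grw [norm_sub_le_of_inner_mul_eq hC hR (hw i) (hw j), ← dist_eq_norm, hb i j N hi hj]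
  obtain ⟨m₀, hm₀⟩ := cauchySeq_tendsto_of_complete hw_cauchy
  refine ⟨m₀, fun m => tendsto_nhds_unique ?_ (((continuous_inner_right m).tendsto m₀).comp hm₀)⟩
  exact (ha₀.const_mul _).congr fun j => hw j m

end CStarModuleRight

open CStarModuleRight

theorem comp_isJAdjointable_general
    {A : Type*} [NonUnitalCStarAlgebra A] [PartialOrder A] [StarOrderedRing A]
    {E : Type*} [NormedAddCommGroup E] [Module ℂ E] [SMul Aᵐᵒᵖ E] [CStarModuleRight A E]
    [CompleteSpace E]
    (J : TwoSidedIdeal A)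
    (T : E →L[ℂ] E) (hT_mod : ∀ (m : E) (a : A), T (m <• a) = T m <• a)
    (S : E →L[ℂ] E) (hS_mod : ∀ (m : E) (a : A), S (m <• a) = S m <• a)
    (hT : IsJAdjointable J T) (hS : IsJAdjointable J S) :
    (∀ (m : E) (a : A), (T.comp S) (m <• a) = (T.comp S) m <• a) ∧
      IsJAdjointable J (T.comp S) := by
  refine ⟨fun m a => by simp [hS_mod, hT_mod], fun n x hx => ?_⟩
  obtain ⟨p, hp⟩ := hT n x hx
  have h_range : Set.range (fun c => x * (star x * x * c)) ⊆
      {a : A | HasAdjointVector (T ∘ S) n a} := by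
    rintro _ ⟨c, rfl⟩
    exact hasAdjointVector_comp_mul hp (hS p _ (J.mul_mem_right _ _ (J.mul_mem_left _ _ hx)))
  let _ : NormedSpace ℂ E := normedSpace A
  exact closure_minimal h_range
    (isClosed_setOf_hasAdjointVector (norm_nonneg _) (T.comp S).le_opNorm n)
    (mem_closure_range_mul_star_mul_self_mul x)

/-- If `J ⊆ A` is an essential closed two-sided ideal and `T, S` are `J`-adjointable
`A`-operators on a Hilbert C*-module `M` over `A`, then `T ∘ S` is a `J`-adjointable
`A`-operator. -/
theorem comp_isJAdjointable
    {A : Type*} [NonUnitalCStarAlgebra A] [PartialOrder A] [StarOrderedRing A]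
    {E : Type*} [NormedAddCommGroup E] [Module ℂ E] [SMul Aᵐᵒᵖ E] [CStarModuleRight A E]
    [CompleteSpace E]
    (J : TwoSidedIdeal A) (hJclosed : IsClosed (J : Set A))
    (hJess : ∀ a : A, (∀ x ∈ J, a * x = 0) → a = 0)
    (T : E →L[ℂ] E) (hT_mod : ∀ (m : E) (a : A), T (m <• a) = T m <• a)
    (S : E →L[ℂ] E) (hS_mod : ∀ (m : E) (a : A), S (m <• a) = S m <• a)
    (hT : IsJAdjointable J T) (hS : IsJAdjointable J S) :
    (∀ (m : E) (a : A), (T.comp S) (m <• a) = (T.comp S) m <• a) ∧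
      IsJAdjointable J (T.comp S) :=
  comp_isJAdjointable_general J T hT_mod S hS_mod hT hS
end

section
/- Let A be a C*-algebra, J ⊆ A an essential ideal, M a Hilbert C*-module over A, and T : M → M a J-adjointable A-operator. Then the restriction T|_{M_J} : M_J → M_J has the same operator norm as T: ‖T|_{M_J}‖ = ‖T‖. (This is the isometricity of the embedding of the algebra of J-adjointable operators on M into the adjointable operators on M_J.) -/
open scoped RightActions

/-!
For `m ∈ M` and `x ∈ J` the vector `m • x` lies in `M_J`, so a bound `C` for `T` on `M_J` gives
`‖x* ⟪Tm, Tm⟫ x‖ = ‖T (m • x)‖² ≤ C² ‖m‖² ‖x‖²` for every `x ∈ J`. In a C*-algebra an essential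
ideal detects the norm of a positive element `b` through these compressions: if `‖b‖ > r ≥ 0`,
the spectral cut-off `c = (b - r)₊` is nonzero, so `y = c x ≠ 0` for some `x ∈ J`, and
`y* b y ≥ r y* y` forces `‖y* b y‖ ≥ r ‖y‖²`. Hence `‖Tm‖² = ‖⟪Tm, Tm⟫‖ ≤ C² ‖m‖²`.
-/

namespace CStarModuleRight

variable {A : Type*} [NonUnitalCStarAlgebra A] [PartialOrder A]
  {E : Type*} [NormedAddCommGroup E] [NormedSpace ℂ E] [SMul Aᵐᵒᵖ E] [CStarModuleRight A E]

lemma norm_inner_self (v : E) : ‖inner A v v‖ = ‖v‖ ^ 2 := by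
  rw [norm_eq_sqrt_norm_inner_self (A := A) v, Real.sq_sqrt (norm_nonneg _)]

lemma inner_op_smul_left (v w : E) (x : A) : inner A (v <• x) w = star x * inner A v w := by
  rw [← star_inner w (v <• x), inner_op_smul_right, star_mul, star_inner]

lemma inner_op_smul_op_smul (v : E) (x : A) :
    inner A (v <• x) (v <• x) = star x * inner A v v * x := by
  rw [inner_op_smul_right, inner_op_smul_left]

lemma norm_op_smul_le (v : E) (x : A) : ‖v <• x‖ ≤ ‖v‖ * ‖x‖ := by
  refine (pow_le_pow_iff_left₀ (norm_nonneg _) (by positivity) two_ne_zero).mp ?_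
  calc ‖v <• x‖ ^ 2 = ‖star x * inner A v v * x‖ := by
        rw [← norm_inner_self (A := A), inner_op_smul_op_smul]
    _ ≤ ‖star x‖ * ‖inner A v v‖ * ‖x‖ := norm_mul₃_le
    _ = (‖v‖ * ‖x‖) ^ 2 := by rw [norm_star, norm_inner_self]; ring

end CStarModuleRight

lemma op_smul_mem_idealSubmodule_s7 {A : Type*} [NonUnitalCStarAlgebra A] {J : TwoSidedIdeal A}
    {E : Type*} [NormedAddCommGroup E] [SMul Aᵐᵒᵖ E] (m : E) {x : A} (hx : x ∈ J) :
    m <• x ∈ idealSubmodule J E :=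
  subset_closure (AddSubmonoid.subset_closure ⟨m, x, hx, rfl⟩)

section EssentialIdeal

variable {A : Type*} [NonUnitalCStarAlgebra A] [PartialOrder A] [StarOrderedRing A]

lemma norm_mem_quasispectrum_of_nonneg {b : A} (hb : 0 ≤ b) : ‖b‖ ∈ quasispectrum ℝ b := by
  rw [Unitization.quasispectrum_eq_spectrum_inr' ℝ ℂ b, ← Unitization.norm_inr (𝕜 := ℂ) b]
  exact CStarAlgebra.norm_mem_spectrum_of_nonneg (Unitization.inr_nonneg_iff.mpr hb)

lemma exists_ne_zero_smul_star_mul_self_le {b : A} (hb : 0 ≤ b) {r : ℝ} (hr₀ : 0 ≤ r)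
    (hr : r < ‖b‖) : ∃ c : A, c ≠ 0 ∧ r • (star c * c) ≤ star c * b * c := by
  set g : ℝ → ℝ := fun t => max (t - r) 0
  have hg0 : g 0 = 0 := by simp [g, hr₀]
  set c := cfcₙ g b
  have hc : star c = c := (cfcₙ_predicate g b).star_eq
  have hcc : r • (star c * c) = cfcₙ (fun t => r • (g t * g t)) b := by
    rw [hc, ← cfcₙ_mul g g b, cfcₙ_smul r (fun t => g t * g t) b]
  have hcbc : star c * b * c = cfcₙ (fun t => g t * t * g t) b := by
    rw [hc, cfcₙ_mul _ g b, cfcₙ_mul g _ b, cfcₙ_id' ℝ b]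
  refine ⟨c, fun hc0 => ?_, ?_⟩
  · have hgb : ‖g ‖b‖‖ ≤ ‖c‖ := norm_apply_le_norm_cfcₙ g b (norm_mem_quasispectrum_of_nonneg hb)
    rw [hc0, norm_zero, norm_le_zero_iff] at hgb
    simp only [g, max_eq_right_iff, tsub_le_iff_right, zero_add] at hgb
    linarith
  · rw [hcc, hcbc]
    refine cfcₙ_mono fun t _ => ?_
    rcases le_or_gt t r with ht | ht
    · simp [g, ht]
    · simp only [g, smul_eq_mul, max_eq_left (sub_nonneg.mpr ht.le)]
      nlinarith [mul_self_nonneg (t - r)]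

lemma norm_le_of_forall_norm_star_mul_mul_le (J : TwoSidedIdeal A)
    (hJess : ∀ a : A, (∀ x ∈ J, a * x = 0) → a = 0) {b : A} (hb : 0 ≤ b) {k : ℝ} (hk : 0 ≤ k)
    (h : ∀ x ∈ J, ‖star x * b * x‖ ≤ k * ‖x‖ ^ 2) : ‖b‖ ≤ k := by
  by_contra! hbk
  obtain ⟨c, hc0, hc⟩ := exists_ne_zero_smul_star_mul_self_le hb (r := (k + ‖b‖) / 2)
    (by positivity) (by linarith)
  obtain ⟨x, hxJ, hcx⟩ : ∃ x ∈ J, c * x ≠ 0 := by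
    by_contra! hall
    exact hc0 (hJess c hall)
  have hconj : ((k + ‖b‖) / 2) • (star (c * x) * (c * x)) ≤ star (c * x) * b * (c * x) := by
    convert star_left_conjugate_le_conjugate hc x using 1 <;>
      simp only [star_mul, mul_smul_comm, smul_mul_assoc, mul_assoc]
  have hlower : (k + ‖b‖) / 2 * ‖c * x‖ ^ 2 ≤ ‖star (c * x) * b * (c * x)‖ := by
    calc (k + ‖b‖) / 2 * ‖c * x‖ ^ 2 = ‖((k + ‖b‖) / 2) • (star (c * x) * (c * x))‖ := by
          rw [norm_smul, CStarRing.norm_star_mul_self, Real.norm_of_nonneg (by positivity), sq]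
      _ ≤ _ := CStarAlgebra.norm_le_norm_of_nonneg_of_le
          (smul_nonneg (by positivity) (star_mul_self_nonneg _)) hconj
  have hpos : 0 < ‖c * x‖ ^ 2 := by positivity
  nlinarith [h _ (J.mul_mem_left c x hxJ)]

end EssentialIdeal

lemma norm_le_of_forall_norm_op_smul_le {A : Type*} [NonUnitalCStarAlgebra A] [PartialOrder A]
    [StarOrderedRing A] {E : Type*} [NormedAddCommGroup E] [NormedSpace ℂ E] [SMul Aᵐᵒᵖ E]
    [CStarModuleRight A E] (J : TwoSidedIdeal A)
    (hJess : ∀ a : A, (∀ x ∈ J, a * x = 0) → a = 0) (T : E → E)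
    (hT_mod : ∀ (m : E) (a : A), T (m <• a) = T m <• a) {C : ℝ} (hC₀ : 0 ≤ C)
    (hC : ∀ m : E, ∀ x ∈ J, ‖T (m <• x)‖ ≤ C * ‖m <• x‖) (m : E) : ‖T m‖ ≤ C * ‖m‖ := by
  have hinner : ‖inner A (T m) (T m)‖ ≤ (C * ‖m‖) ^ 2 := by
    refine norm_le_of_forall_norm_star_mul_mul_le J hJess CStarModuleRight.inner_self_nonneg
      (by positivity) fun x hx => ?_
    calc ‖star x * inner A (T m) (T m) * x‖ = ‖T (m <• x)‖ ^ 2 := by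
          rw [hT_mod, ← CStarModuleRight.norm_inner_self (A := A),
            CStarModuleRight.inner_op_smul_op_smul]
      _ ≤ (C * (‖m‖ * ‖x‖)) ^ 2 := by
          gcongr
          exact (hC m x hx).trans (by gcongr; exact CStarModuleRight.norm_op_smul_le m x)
      _ = (C * ‖m‖) ^ 2 * ‖x‖ ^ 2 := by ring
  rw [CStarModuleRight.norm_inner_self] at hinner
  exact (pow_le_pow_iff_left₀ (norm_nonneg _) (by positivity) two_ne_zero).mp hinner

theorem norm_restriction_eq_general
    {A : Type*} [NonUnitalCStarAlgebra A] [PartialOrder A] [StarOrderedRing A]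
    {E : Type*} [NormedAddCommGroup E] [NormedSpace ℂ E] [SMul Aᵐᵒᵖ E] [CStarModuleRight A E]
    (J : TwoSidedIdeal A)
    (hJess : ∀ a : A, (∀ x ∈ J, a * x = 0) → a = 0)
    (T : E →L[ℂ] E) (hT_mod : ∀ (m : E) (a : A), T (m <• a) = T m <• a) :
    sInf {C : ℝ | 0 ≤ C ∧ ∀ m ∈ idealSubmodule J E, ‖T m‖ ≤ C * ‖m‖} = ‖T‖ := by
  refine IsLeast.csInf_eq ⟨⟨norm_nonneg T, fun m _ => T.le_opNorm m⟩, ?_⟩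
  rintro C ⟨hC₀, hC⟩
  exact T.opNorm_le_bound hC₀ <| norm_le_of_forall_norm_op_smul_le J hJess T hT_mod hC₀
    fun m x hx => hC _ (op_smul_mem_idealSubmodule_s7 m hx)

/-- If `J ⊆ A` is an essential closed two-sided ideal and `T` is a `J`-adjointable `A`-operator
on a Hilbert C*-module `M` over `A`, then the operator norm of the restriction of `T` to `M_J`
(expressed as the infimum of the admissible Lipschitz-type bounds on `M_J`) equals `‖T‖`. -/
theorem norm_restriction_eq
    {A : Type*} [NonUnitalCStarAlgebra A] [PartialOrder A] [StarOrderedRing A]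
    {E : Type*} [NormedAddCommGroup E] [NormedSpace ℂ E] [SMul Aᵐᵒᵖ E] [CStarModuleRight A E]
    [CompleteSpace E]
    (J : TwoSidedIdeal A) (hJclosed : IsClosed (J : Set A))
    (hJess : ∀ a : A, (∀ x ∈ J, a * x = 0) → a = 0)
    (T : E →L[ℂ] E) (hT_mod : ∀ (m : E) (a : A), T (m <• a) = T m <• a)
    (hT_Jadj : ∀ (n : E), ∀ x ∈ J, ∃ m₀ : E, ∀ m : E,
      (inner A (T m) n : A) * x = inner A m m₀) :
    sInf {C : ℝ | 0 ≤ C ∧ ∀ m ∈ idealSubmodule J E, ‖T m‖ ≤ C * ‖m‖} = ‖T‖ :=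
  norm_restriction_eq_general J hJess T hT_mod
end

section
/- Let A be a C*-algebra, J ⊆ A an essential ideal, and c ∈ A a selfadjoint element. If x*·c·x ≥ 0 for every x ∈ J, then c ≥ 0. -/
/-!
Conjugate `c` by `s = √(c⁻)`: since `s` annihilates `c⁺`, one gets `s c s = -(c⁻)²`, so for
`x ∈ J` the hypothesis applied to `s x ∈ J` reads `0 ≤ -(c⁻x)* (c⁻x)`. Hence `c⁻ x = 0` for all
`x ∈ J`, and essentiality of `J` forces `c⁻ = 0`, i.e. `c ≥ 0`.
-/

section CStarAlgebra

variable {A : Type*} [NonUnitalCStarAlgebra A] [PartialOrder A] [StarOrderedRing A]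

lemma eq_zero_of_star_mul_self_nonpos {y : A} (hy : star y * y ≤ 0) : y = 0 :=
  (CStarRing.star_mul_self_eq_zero_iff y).mp <| le_antisymm hy (star_mul_self_nonneg y)

lemma CFC.sqrt_mul_eq_zero_of_mul_eq_zero {a b : A} (ha : 0 ≤ a) (hb : IsSelfAdjoint b)
    (hab : a * b = 0) : CFC.sqrt a * b = 0 := by
  refine (CStarRing.star_mul_self_eq_zero_iff _).mp ?_
  calc star (CFC.sqrt a * b) * (CFC.sqrt a * b)
      = b * (CFC.sqrt a * CFC.sqrt a) * b := by
        rw [star_mul, hb.star_eq, (CFC.sqrt_nonneg a).isSelfAdjoint.star_eq]; noncomm_ring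
    _ = 0 := by rw [CFC.sqrt_mul_sqrt_self a ha, mul_assoc, hab, mul_zero]

lemma CFC.sqrt_negPart_mul_mul_sqrt_negPart {c : A} (hc : IsSelfAdjoint c) :
    CFC.sqrt c⁻ * c * CFC.sqrt c⁻ = -(c⁻ * c⁻) := by
  have hpos : CFC.sqrt c⁻ * c⁺ = 0 :=
    CFC.sqrt_mul_eq_zero_of_mul_eq_zero (CFC.negPart_nonneg c)
      (CFC.posPart_nonneg c).isSelfAdjoint (CFC.negPart_mul_posPart c)
  have hsq : CFC.sqrt c⁻ * CFC.sqrt c⁻ = c⁻ := CFC.sqrt_mul_sqrt_self _ (CFC.negPart_nonneg c)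
  calc CFC.sqrt c⁻ * c * CFC.sqrt c⁻ = CFC.sqrt c⁻ * (c⁺ - c⁻) * CFC.sqrt c⁻ := by
        rw [CFC.posPart_sub_negPart c hc]
    _ = -(c⁻ * c⁻) := by
        generalize CFC.sqrt c⁻ = s at hpos hsq ⊢
        rw [← hsq, mul_sub, sub_mul, hpos, zero_mul, zero_sub]
        noncomm_ring

lemma CFC.star_mul_sqrt_negPart_conj {c : A} (hc : IsSelfAdjoint c) (x : A) :
    star (CFC.sqrt c⁻ * x) * c * (CFC.sqrt c⁻ * x) = -(star (c⁻ * x) * (c⁻ * x)) := by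
  rw [star_mul, star_mul, (CFC.sqrt_nonneg c⁻).isSelfAdjoint.star_eq,
    (CFC.negPart_nonneg c).isSelfAdjoint.star_eq]
  calc star x * CFC.sqrt c⁻ * c * (CFC.sqrt c⁻ * x)
      = star x * (CFC.sqrt c⁻ * c * CFC.sqrt c⁻) * x := by noncomm_ring
    _ = -(star x * c⁻ * (c⁻ * x)) := by
        rw [CFC.sqrt_negPart_mul_mul_sqrt_negPart hc]; noncomm_ring

end CStarAlgebra

theorem nonneg_of_conj_nonneg_on_essential_ideal_general
    {A : Type*} [NonUnitalCStarAlgebra A] [PartialOrder A] [StarOrderedRing A]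
    (J : TwoSidedIdeal A)
    (hJess : ∀ a : A, (∀ x ∈ J, a * x = 0) → a = 0)
    (c : A) (hc : IsSelfAdjoint c)
    (h : ∀ x ∈ J, 0 ≤ star x * c * x) :
    0 ≤ c := by
  have hnegPart : ∀ x ∈ J, c⁻ * x = 0 := fun x hx ↦ by
    have hconj := h _ (J.mul_mem_left (CFC.sqrt c⁻) x hx)
    rw [CFC.star_mul_sqrt_negPart_conj hc] at hconj
    exact eq_zero_of_star_mul_self_nonpos (neg_nonneg.mp hconj)
  exact (CFC.negPart_eq_zero_iff c hc).mp (hJess _ hnegPart)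

/-- If `J ⊆ A` is an essential closed two-sided ideal of a C*-algebra `A` and `c ∈ A` is a
selfadjoint element such that `x* · c · x ≥ 0` for every `x ∈ J`, then `c ≥ 0`. -/
theorem nonneg_of_conj_nonneg_on_essential_ideal
    {A : Type*} [NonUnitalCStarAlgebra A] [PartialOrder A] [StarOrderedRing A]
    (J : TwoSidedIdeal A) (hJclosed : IsClosed (J : Set A))
    (hJess : ∀ a : A, (∀ x ∈ J, a * x = 0) → a = 0)
    (c : A) (hc : IsSelfAdjoint c)
    (h : ∀ x ∈ J, 0 ≤ star x * c * x) :
    0 ≤ c :=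
  nonneg_of_conj_nonneg_on_essential_ideal_general J hJess c hc h
end

section
/- Let A be a C*-algebra, J ⊆ A an essential ideal, M a Hilbert C*-module over A, T : M → M an A-operator, and K ≥ 0. If x*·⟪T m, T m⟫·x ≤ K·x*·⟪m, m⟫·x for every m ∈ M and every x ∈ J, then ⟪T m, T m⟫ ≤ K·⟪m, m⟫ for every m ∈ M. -/
open scoped RightActions

lemma IsSelfAdjoint.mul_eq_zero_of_mul_mul_eq_zero {R : Type*} [NonUnitalNormedRing R]
    [StarRing R] [CStarRing R] {a x : R} (ha : IsSelfAdjoint a) (h : a * (a * x) = 0) :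
    a * x = 0 := by
  rw [← CStarRing.star_mul_self_eq_zero_iff, star_mul, ha.star_eq, mul_assoc, h, mul_zero]

section

variable {A : Type*} [NonUnitalCStarAlgebra A] [PartialOrder A] [StarOrderedRing A]

lemma mul_eq_zero_of_star_mul_mul_eq_zero {a x : A} (ha : 0 ≤ a) (h : star x * a * x = 0) :
    a * x = 0 := by
  have hsq : CFC.sqrt a * CFC.sqrt a = a := CFC.sqrt_mul_sqrt_self a ha
  have hsqrt : CFC.sqrt a * x = 0 := by
    rw [← CStarRing.star_mul_self_eq_zero_iff, star_mul,
      (CFC.sqrt_nonneg a).isSelfAdjoint.star_eq, ← mul_assoc, mul_assoc (star x), hsq, h]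
  rw [← hsq, mul_assoc, hsqrt, mul_zero]

lemma IsSelfAdjoint.nonneg_of_conj_nonneg_on_essential_ideal {b : A} (hb : IsSelfAdjoint b)
    (J : TwoSidedIdeal A) (hJ : ∀ a : A, (∀ x ∈ J, a * x = 0) → a = 0)
    (h : ∀ x ∈ J, 0 ≤ star x * b * x) : 0 ≤ b := by
  rw [← CFC.negPart_eq_zero_iff b hb]
  have hc : 0 ≤ b⁻ := CFC.negPart_nonneg b
  have hcube : 0 ≤ b⁻ * b⁻ * b⁻ := conjugate_nonneg_of_nonneg hc hc
  have hbc : b * b⁻ = -(b⁻ * b⁻) := by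
    nth_rw 1 [← CFC.posPart_sub_negPart b hb]
    rw [sub_mul, CFC.posPart_mul_negPart, zero_sub]
  have hconj_cube : ∀ x ∈ J, star x * (b⁻ * b⁻ * b⁻) * x = 0 := by
    intro x hx
    have hcx := h (b⁻ * x) (J.mul_mem_left _ _ hx)
    rw [star_mul, hc.isSelfAdjoint.star_eq,
      show star x * b⁻ * b * (b⁻ * x) = star x * (b⁻ * (b * b⁻)) * x by simp only [mul_assoc],
      hbc] at hcx
    refine le_antisymm ?_ (star_left_conjugate_nonneg hcube x)
    simpa only [mul_neg, neg_mul, neg_nonneg, mul_assoc] using hcx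
  refine hJ _ fun x hx => ?_
  have hcube_x : b⁻ * (b⁻ * (b⁻ * x)) = 0 := by
    simpa only [mul_assoc] using mul_eq_zero_of_star_mul_mul_eq_zero hcube (hconj_cube x hx)
  exact hc.isSelfAdjoint.mul_eq_zero_of_mul_mul_eq_zero
    (hc.isSelfAdjoint.mul_eq_zero_of_mul_mul_eq_zero hcube_x)

end

theorem inner_le_of_conj_le_on_essential_ideal_general
    {A : Type*} [NonUnitalCStarAlgebra A] [PartialOrder A] [StarOrderedRing A]
    {E : Type*} [NormedAddCommGroup E] [Module ℂ E] [SMul Aᵐᵒᵖ E] [CStarModuleRight A E]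
    (J : TwoSidedIdeal A)
    (hJess : ∀ a : A, (∀ x ∈ J, a * x = 0) → a = 0)
    (T : E →L[ℂ] E)
    (K : ℝ)
    (h : ∀ (m : E), ∀ x ∈ J,
      star x * (inner A (T m) (T m) : A) * x ≤ K • (star x * (inner A m m : A) * x)) :
    ∀ m : E, (inner A (T m) (T m) : A) ≤ K • (inner A m m : A) := by
  intro m
  have hsa : IsSelfAdjoint (K • (inner A m m : A) - inner A (T m) (T m)) :=
    ((IsSelfAdjoint.all K).smul (CStarModuleRight.inner_self_nonneg (x := m)).isSelfAdjoint).sub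
      (CStarModuleRight.inner_self_nonneg (x := T m)).isSelfAdjoint
  rw [← sub_nonneg]
  refine hsa.nonneg_of_conj_nonneg_on_essential_ideal J hJess fun x hx => ?_
  rw [mul_sub, sub_mul, mul_smul_comm, smul_mul_assoc, sub_nonneg]
  exact h m x hx

/-- Let `J ⊆ A` be an essential closed two-sided ideal, `M` a Hilbert C*-module over `A`,
`T` an `A`-operator on `M`, and `K ≥ 0`. If `x* · ⟪T m, T m⟫ · x ≤ K · x* · ⟪m, m⟫ · x` for
every `m ∈ M` and `x ∈ J`, then `⟪T m, T m⟫ ≤ K · ⟪m, m⟫` for every `m ∈ M`. -/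
theorem inner_le_of_conj_le_on_essential_ideal
    {A : Type*} [NonUnitalCStarAlgebra A] [PartialOrder A] [StarOrderedRing A]
    {E : Type*} [NormedAddCommGroup E] [Module ℂ E] [SMul Aᵐᵒᵖ E] [CStarModuleRight A E]
    [CompleteSpace E]
    (J : TwoSidedIdeal A) (hJclosed : IsClosed (J : Set A))
    (hJess : ∀ a : A, (∀ x ∈ J, a * x = 0) → a = 0)
    (T : E →L[ℂ] E) (hT_mod : ∀ (m : E) (a : A), T (m <• a) = T m <• a)
    (K : ℝ) (hK : 0 ≤ K)
    (h : ∀ (m : E), ∀ x ∈ J,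
      star x * (inner A (T m) (T m) : A) * x ≤ K • (star x * (inner A m m : A) * x)) :
    ∀ m : E, (inner A (T m) (T m) : A) ≤ K • (inner A m m : A) :=
  inner_le_of_conj_le_on_essential_ideal_general J hJess T K h
end
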